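/- Let F₀(ℕ) = {f ∈ l∞(ℕ) : AE(f) = 0 and f(ℕ) is a finite set}. Then the character space E₀(ℕ) of E₀ is totally disconnected if and only if E₀ equals the closure of F₀(ℕ) in l∞(ℕ) with respect to the supremum norm. -/

import Mathlib

open Filter Set Topology

namespace Anqie

variable {X : Type*} [TopologicalSpace X]

/-- `𝒰` is an open cover of `X`. -/
def IsOpenCover (𝒰 : Set (Set X)) : Prop :=
  (∀ U ∈ 𝒰, IsOpen U) ∧ ⋃₀ 𝒰 = Set.univ

/-- The common refinement `𝒰 ∨ T⁻¹ 𝒰 ∨ ⋯ ∨ T^{-(n-1)} 𝒰`. -/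
def iterJoin (T : X → X) (𝒰 : Set (Set X)) (n : ℕ) : Set (Set X) :=
  {V | ∃ u : Fin n → Set X, (∀ j, u j ∈ 𝒰) ∧ V = ⋂ j : Fin n, T^[(j : ℕ)] ⁻¹' u j}

/-- The minimal cardinality of a finite subcover of `𝒱` (junk value `0` if none exists). -/
noncomputable def coverNum (𝒱 : Set (Set X)) : ℕ :=
  sInf {k | ∃ F : Finset (Set X), (↑F : Set (Set X)) ⊆ 𝒱 ∧
    ⋃₀ (↑F : Set (Set X)) = Set.univ ∧ F.card = k}

/-- The Adler–Konheim–McAndrew entropy of `T` relative to the open cover `𝒰`. -/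
noncomputable def coverEntropy (T : X → X) (𝒰 : Set (Set X)) : EReal :=
  Filter.atTop.limsup fun n : ℕ =>
    ((Real.log (coverNum (iterJoin T 𝒰 n)) / n : ℝ) : EReal)

/-- The Adler–Konheim–McAndrew topological entropy of `T`, via open covers. -/
noncomputable def entropy (T : X → X) : EReal :=
  ⨆ 𝒰 ∈ {𝒰 : Set (Set X) | IsOpenCover 𝒰}, coverEntropy T 𝒰

/-- The set of forward-orbit sequences of `f : ℕ → X` inside `X^ℕ`. -/
def orbitSet (f : ℕ → X) : Set (ℕ → X) :=
  {ω | ∃ n : ℕ, ∀ k : ℕ, ω k = f (n + k)}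

/-- `X_f`, the closure of the set of orbit sequences in the product topology. -/
def orbitClosure (f : ℕ → X) : Set (ℕ → X) := closure (orbitSet f)

lemma shift_mem_orbitClosure (f : ℕ → X) {ω : ℕ → X} (hω : ω ∈ orbitClosure f) :
    (fun k => ω (k + 1)) ∈ orbitClosure f := by
  have hcont : Continuous fun ω : ℕ → X => fun k => ω (k + 1) :=
    continuous_pi fun k => continuous_apply (k + 1)
  have hmaps : MapsTo (fun ω : ℕ → X => fun k => ω (k + 1)) (orbitSet f) (orbitSet f) := by
    rintro ω ⟨n, hn⟩
    refine ⟨n + 1, fun k => ?_⟩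
    show ω (k + 1) = f (n + 1 + k)
    rw [hn (k + 1)]; congr 1; omega
  exact map_mem_closure hcont hω hmaps

/-- `B_f`, the left shift restricted to `X_f`. -/
def shiftOn (f : ℕ → X) : orbitClosure f → orbitClosure f :=
  fun ω => ⟨fun k => (ω : ℕ → X) (k + 1), shift_mem_orbitClosure f ω.2⟩

/-- The anqie entropy of a map `f : ℕ → X`: the AKM topological entropy of the
left shift on `X_f`. -/
noncomputable def AE (f : ℕ → X) : EReal := entropy (shiftOn f)

end Anqie

namespace Anqie

/-- The elements of `E₀`: bounded arithmetic functions with zero anqie entropy. -/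
abbrev E0sub : Type := {f : BoundedContinuousFunction ℕ ℂ // AE ⇑f = 0}

/-- The character space (maximal ideal space) `E₀(ℕ)` of the commutative unital
C*-algebra `E₀`: nonzero multiplicative linear functionals on `E₀`, as a subset of
`E₀ → ℂ` with the topology of pointwise (weak*) convergence. -/
def CharSpace : Set (E0sub → ℂ) :=
  {φ | (∃ f, φ f ≠ 0) ∧
    (∀ f g h : E0sub, (h : BoundedContinuousFunction ℕ ℂ) =
      (f : BoundedContinuousFunction ℕ ℂ) + g → φ h = φ f + φ g) ∧
    (∀ (c : ℂ) (f g : E0sub), (g : BoundedContinuousFunction ℕ ℂ) =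
      c • (f : BoundedContinuousFunction ℕ ℂ) → φ g = c * φ f) ∧
    (∀ f g h : E0sub, (h : BoundedContinuousFunction ℕ ℂ) =
      (f : BoundedContinuousFunction ℕ ℂ) * g → φ h = φ f * φ g)}

end Anqie

/-!
Zero entropy is detected by cylinders: for bounded `f`, `AE f = 0` iff for every `ε > 0` the
number of length-`n` `ε`-cylinders needed to cover `X_f` grows subexponentially in `n`. These
counts are submultiplicative for the pair `n ↦ (f n, g n)` and are controlled under uniform
approximation, and `X_{ψ ∘ f}` is a factor of `X_f`. Hence `E₀` is a closed unital *-subalgebra of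
`ℓ∞(ℕ)`, i.e. a commutative C⋆-algebra, and `E₀(ℕ)` is its Gelfand spectrum `Ω`.

By spectral permanence the spectrum of `t ∈ E₀` is squeezed between `range t` and its closure, so
`t` has finite spectrum iff it has finite range. Finally, `Ω` is totally disconnected iff the
elements of finite spectrum are dense: if `Ω` is totally disconnected, the locally constant
functions are dense in `C(Ω) ≅ E₀` by Stone–Weierstrass; conversely, `χ ↦ χ a` is constant on a
connected set of characters when `a` has finite spectrum, hence for all `a` by density, and
characters are determined by their values.
-/

open Filter Set Topology Asymptotics Uniformity WeakDual
open scoped BoundedContinuousFunction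

theorem ContinuousMap.dense_setOf_finite_range {X : Type*} [TopologicalSpace X] [CompactSpace X]
    [T2Space X] [TotallyDisconnectedSpace X] : Dense {g : C(X, ℂ) | (range g).Finite} := by
  let S : StarSubalgebra ℂ C(X, ℂ) :=
    { (LocallyConstant.toContinuousMapAlgHom ℂ).range with
      star_mem' := by
        rintro _ ⟨g, rfl⟩
        exact ⟨g.map star, rfl⟩ }
  have hS : S.topologicalClosure = ⊤ :=
    ContinuousMap.starSubalgebra_topologicalClosure_eq_top_of_separatesPoints S
      (LocallyConstant.separatesPoints_range_toContinuousMapAlgHom ℂ)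
  have hdense : Dense (S : Set C(X, ℂ)) := by
    rw [dense_iff_closure_eq, ← StarSubalgebra.topologicalClosure_coe, hS]
    rfl
  refine hdense.mono ?_
  rintro _ ⟨g, rfl⟩
  exact g.range_finite

section Gelfand

theorem totallyDisconnectedSpace_of_dense_setOf_spectrum_finite {A : Type*} [NormedCommRing A]
    [NormedAlgebra ℂ A] [CompleteSpace A] (h : Dense {a : A | (spectrum ℂ a).Finite}) :
    TotallyDisconnectedSpace (characterSpace ℂ A) := by
  refine ⟨fun S _ hS φ hφ ψ hψ => CharacterSpace.ext fun a => ?_⟩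
  have hfin : EqOn φ ψ {a : A | (spectrum ℂ a).Finite} := fun b hb =>
    have hsub : (fun χ : characterSpace ℂ A => χ b) '' S ⊆ spectrum ℂ b := by
      rintro _ ⟨χ, -, rfl⟩
      exact CharacterSpace.apply_mem_spectrum χ b
    hb.countable.isTotallyDisconnected _ hsub
      (hS.image _ ((eval_continuous b).comp continuous_subtype_val).continuousOn)
      ⟨φ, hφ, rfl⟩ ⟨ψ, hψ, rfl⟩
  exact congrFun (Continuous.ext_on h (map_continuous φ) (map_continuous ψ) hfin) a

variable {A : Type*} [CommCStarAlgebra A]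

theorem dense_setOf_spectrum_finite_of_totallyDisconnectedSpace
    [TotallyDisconnectedSpace (characterSpace ℂ A)] : Dense {a : A | (spectrum ℂ a).Finite} := by
  let γ := gelfandStarTransform A
  have hγ : Isometry γ.symm := (gelfandTransform_isometry A).right_inv γ.right_inv
  have : {a : A | (spectrum ℂ a).Finite} = γ.symm '' {g | (range g).Finite} := by
    ext a
    rw [← γ.symm_apply_apply a, (EquivLike.injective γ.symm).mem_set_image, mem_ofPred_eq,
      mem_ofPred_eq, ← AlgEquiv.spectrum_eq γ, γ.apply_symm_apply, ContinuousMap.spectrum_eq_range]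
  rw [this]
  exact γ.symm.surjective.denseRange.dense_image hγ.continuous
    ContinuousMap.dense_setOf_finite_range

theorem totallyDisconnectedSpace_characterSpace_iff_dense :
    TotallyDisconnectedSpace (characterSpace ℂ A) ↔ Dense {a : A | (spectrum ℂ a).Finite} :=
  ⟨fun _ => dense_setOf_spectrum_finite_of_totallyDisconnectedSpace,
    totallyDisconnectedSpace_of_dense_setOf_spectrum_finite⟩

end Gelfand

theorem BoundedContinuousFunction.spectrum_subset_closure_range {α : Type*} [TopologicalSpace α]
    (f : α →ᵇ ℂ) : spectrum ℂ f ⊆ closure (range f) := by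
  intro z hz
  by_contra hzf
  rw [Metric.mem_closure_iff] at hzf
  push Not at hzf
  obtain ⟨δ, hδ, hsep⟩ := hzf
  have hδz : ∀ x, δ ≤ ‖z - f x‖ := fun x => by simpa [dist_eq_norm] using hsep _ ⟨x, rfl⟩
  have hne : ∀ x, z - f x ≠ 0 := fun x => norm_pos_iff.1 (hδ.trans_le (hδz x))
  let g : α →ᵇ ℂ := .ofNormedAddCommGroup (fun x => (z - f x)⁻¹)
    ((continuous_const.sub f.continuous).inv₀ hne) δ⁻¹ fun x => by
      rw [norm_inv]; exact inv_anti₀ hδ (hδz x)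
  refine hz (IsUnit.of_mul_eq_one g ?_)
  ext x
  simp [g, hne x]

namespace Anqie

section Covers

variable {X Y : Type*} {𝒰 𝒱 : Set (Set X)}

lemma coverNum_le_card {F : Finset (Set X)} (hF𝒱 : ↑F ⊆ 𝒱) (hF : ⋃₀ (F : Set (Set X)) = univ) :
    coverNum 𝒱 ≤ F.card :=
  Nat.sInf_le ⟨F, hF𝒱, hF, rfl⟩

lemma coverNum_le_card_of_cover {ι : Type*} {𝒲 : Set (Set Y)} {s : Finset ι} (Φ : ι → Set Y)
    (hΦ : ∀ i ∈ s, Φ i ∈ 𝒲) (hs : ∀ y, ∃ i ∈ s, y ∈ Φ i) : coverNum 𝒲 ≤ s.card := by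
  classical
  refine (coverNum_le_card (F := s.image Φ) ?_ ?_).trans Finset.card_image_le
  · simpa [Set.subset_def] using hΦ
  · refine eq_univ_of_forall fun y => ?_
    obtain ⟨i, hi, hy⟩ := hs y
    exact ⟨Φ i, Finset.mem_image_of_mem Φ hi, hy⟩

lemma coverNum_le_one [Subsingleton X] (h : ⋃₀ 𝒱 = univ) : coverNum 𝒱 ≤ 1 := by
  rcases isEmpty_or_nonempty X with hX | ⟨⟨x⟩⟩
  · exact (coverNum_le_card (F := ∅) (by simp) (by simp [eq_empty_of_isEmpty])).trans zero_le_one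
  · obtain ⟨V, hV, hx⟩ := h ▸ mem_univ x
    refine coverNum_le_card (F := {V}) (by simpa using hV) ?_
    simpa using eq_univ_of_forall fun y => Subsingleton.elim x y ▸ hx

def Refines (𝒱 𝒰 : Set (Set X)) : Prop := ∀ V ∈ 𝒱, ∃ U ∈ 𝒰, V ⊆ U

lemma Refines.iterJoin_add {T : X → X} {m : ℕ} (h : Refines (iterJoin T 𝒱 m) 𝒰) (n : ℕ) :
    Refines (iterJoin T 𝒱 (n + m)) (iterJoin T 𝒰 n) := by
  rintro _ ⟨u, hu, rfl⟩
  choose U hU hsub using fun j : Fin n =>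
    h _ ⟨fun i : Fin m => u ⟨i + j, by omega⟩, fun i => hu _, rfl⟩
  refine ⟨_, ⟨U, hU, rfl⟩, fun x hx => mem_iInter.2 fun j => hsub j (mem_iInter.2 fun i => ?_)⟩
  rw [mem_preimage, ← Function.iterate_add_apply]
  exact mem_iInter.1 hx ⟨i + j, by omega⟩

variable [TopologicalSpace X]

lemma IsOpenCover.exists_finset_card_eq_coverNum [CompactSpace X] (h : IsOpenCover 𝒱) :
    ∃ F : Finset (Set X), ↑F ⊆ 𝒱 ∧ ⋃₀ (F : Set (Set X)) = univ ∧ F.card = coverNum 𝒱 := by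
  classical
  obtain ⟨F, hF⟩ := isCompact_univ.elim_finite_subcover (fun V : 𝒱 => (V : Set X))
    (fun V => h.1 V V.2) (by rw [← sUnion_eq_iUnion, h.2])
  refine Nat.sInf_mem (s := {k | ∃ F : Finset (Set X), ↑F ⊆ 𝒱 ∧
    ⋃₀ (F : Set (Set X)) = univ ∧ F.card = k})
    ⟨_, F.image (↑), by rw [Finset.coe_image]; exact image_subset_iff.2 fun V _ => V.2, ?_, rfl⟩
  refine eq_univ_of_forall fun x => ?_
  obtain ⟨V, hV, hx⟩ := mem_iUnion₂.1 (hF (mem_univ x))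
  exact ⟨V, Finset.mem_image_of_mem _ hV, hx⟩

lemma coverNum_le_of_refines [CompactSpace X] (h𝒱 : IsOpenCover 𝒱) (h : Refines 𝒱 𝒰) :
    coverNum 𝒰 ≤ coverNum 𝒱 := by
  obtain ⟨F, hF𝒱, hF, hcard⟩ := h𝒱.exists_finset_card_eq_coverNum
  choose! Φ hΦ hsub using fun V (hV : V ∈ F) => h V (hF𝒱 hV)
  refine hcard ▸ coverNum_le_card_of_cover Φ hΦ fun x => ?_
  obtain ⟨V, hV, hx⟩ := hF ▸ mem_univ x
  exact ⟨V, hV, hsub V hV hx⟩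

variable {T : X → X}

lemma IsOpenCover.iterJoin (h : IsOpenCover 𝒰) (hT : Continuous T) (n : ℕ) :
    IsOpenCover (iterJoin T 𝒰 n) := by
  refine ⟨?_, eq_univ_of_forall fun x => ?_⟩
  · rintro V ⟨u, hu, rfl⟩
    exact isOpen_iInter_of_finite fun j => (h.1 _ (hu j)).preimage (hT.iterate _)
  · choose u hu hxu using fun j : Fin n => h.2 ▸ mem_univ (T^[j] x)
    exact ⟨_, ⟨u, hu, rfl⟩, mem_iInter.2 hxu⟩

end Covers

section Growth

lemma log_natCast_le_log_natCast {a b : ℕ} (h : a ≤ b) : Real.log a ≤ Real.log b := by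
  rcases Nat.eq_zero_or_pos a with rfl | ha
  · simpa using Real.log_natCast_nonneg b
  · exact Real.log_le_log (by exact_mod_cast ha) (by exact_mod_cast h)

lemma log_natCast_mul_le (a b : ℕ) : Real.log (a * b : ℕ) ≤ Real.log a + Real.log b := by
  rcases Nat.eq_zero_or_pos a with rfl | ha
  · simpa using Real.log_natCast_nonneg b
  rcases Nat.eq_zero_or_pos b with rfl | hb
  · simpa using Real.log_natCast_nonneg a
  rw [Nat.cast_mul, Real.log_mul (by positivity) (by positivity)]

def SubexpGrowth (a : ℕ → ℕ) : Prop :=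
  (fun n => Real.log (a n)) =o[atTop] fun n => (n : ℝ)

variable {a b : ℕ → ℕ}

lemma SubexpGrowth.of_log_le {u : ℕ → ℝ} (hu : u =o[atTop] fun n => (n : ℝ))
    (h : ∀ n, Real.log (a n) ≤ u n) : SubexpGrowth a := by
  refine IsBigO.trans_isLittleO (isBigO_of_le _ fun n => ?_) hu
  rw [Real.norm_of_nonneg (Real.log_natCast_nonneg _)]
  exact (h n).trans (le_abs_self _)

lemma SubexpGrowth.mono (hb : SubexpGrowth b) (h : ∀ n, a n ≤ b n) : SubexpGrowth a :=
  .of_log_le hb fun n => log_natCast_le_log_natCast (h n)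

lemma subexpGrowth_of_le_one (h : ∀ n, a n ≤ 1) : SubexpGrowth a :=
  .of_log_le (isLittleO_zero _ _) fun n => by
    simpa using log_natCast_le_log_natCast (h n)

lemma SubexpGrowth.mul (ha : SubexpGrowth a) (hb : SubexpGrowth b) : SubexpGrowth (a * b) :=
  .of_log_le (ha.add hb) fun n => log_natCast_mul_le (a n) (b n)

lemma SubexpGrowth.comp_add_const (h : SubexpGrowth a) (m : ℕ) :
    SubexpGrowth fun n => a (n + m) := by
  have hO : (fun n : ℕ => ((n + m : ℕ) : ℝ)) =O[atTop] fun n => (n : ℝ) := by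
    refine IsBigO.of_bound 2 ((eventually_ge_atTop m).mono fun n (hn : m ≤ n) => ?_)
    simp only [Real.norm_natCast]
    norm_cast
    omega
  exact (h.comp_tendsto (tendsto_add_atTop_nat m)).trans_isBigO hO

lemma limsup_div_nonpos_iff {u : ℕ → ℝ} (hu : 0 ≤ u) :
    limsup (fun n => ((u n / n : ℝ) : EReal)) atTop ≤ 0 ↔ u =o[atTop] fun n => (n : ℝ) := by
  rw [isLittleO_iff_tendsto' ((eventually_ne_atTop 0).mono fun n hn h => absurd h (by simpa))]
  constructor
  · intro h
    refine EReal.tendsto_coe.1 (tendsto_of_le_liminf_of_limsup_le ?_ h)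
    exact le_liminf_of_le (by isBoundedDefault) (Eventually.of_forall fun n =>
      EReal.coe_nonneg.2 (div_nonneg (hu n) n.cast_nonneg))
  · intro h
    exact ((continuous_coe_real_ereal.tendsto 0).comp h).limsup_eq.le

end Growth

section Entropy

variable {X Y : Type*} {T : X → X}

lemma coverEntropy_nonpos_iff {𝒰 : Set (Set X)} :
    coverEntropy T 𝒰 ≤ 0 ↔ SubexpGrowth fun n => coverNum (iterJoin T 𝒰 n) :=
  limsup_div_nonpos_iff fun _ => Real.log_natCast_nonneg _

lemma exists_eq_preimage_of_mem_iterJoin {π : X → Y} {S : Y → Y} (h : Function.Semiconj π T S)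
    {𝒰 : Set (Set Y)} {n : ℕ} {V : Set X} (hV : V ∈ iterJoin T ((π ⁻¹' ·) '' 𝒰) n) :
    ∃ W ∈ iterJoin S 𝒰 n, V = π ⁻¹' W := by
  obtain ⟨u, hu, rfl⟩ := hV
  choose U hU hUu using hu
  refine ⟨_, ⟨U, hU, rfl⟩, ?_⟩
  simp only [preimage_iInter, ← hUu, ← preimage_comp, (h.iterate_right _).comp_eq]

variable [TopologicalSpace X] [TopologicalSpace Y]

lemma entropy_nonneg (T : X → X) : 0 ≤ entropy T := by
  have hcov : IsOpenCover ({univ} : Set (Set X)) := ⟨by simp, by simp⟩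
  refine le_trans ?_ (le_biSup (coverEntropy T) hcov)
  exact le_limsup_of_frequently_le (Frequently.of_forall fun n =>
    EReal.coe_nonneg.2 (div_nonneg (Real.log_natCast_nonneg _) n.cast_nonneg))

lemma entropy_eq_zero_iff :
    entropy T = 0 ↔ ∀ 𝒰, IsOpenCover 𝒰 → SubexpGrowth fun n => coverNum (iterJoin T 𝒰 n) := by
  rw [← (entropy_nonneg T).ge_iff_eq', entropy, iSup₂_le_iff]
  simp only [coverEntropy_nonpos_iff, mem_ofPred_eq]

lemma entropy_eq_zero_of_subsingleton [Subsingleton X] (T : X → X) : entropy T = 0 :=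
  entropy_eq_zero_iff.2 fun _ h𝒰 => subexpGrowth_of_le_one fun n =>
    coverNum_le_one (h𝒰.iterJoin (continuous_of_const fun _ _ => Subsingleton.elim _ _) n).2

lemma IsOpenCover.preimage {𝒰 : Set (Set Y)} (h : IsOpenCover 𝒰) {π : X → Y}
    (hπ : Continuous π) : IsOpenCover ((π ⁻¹' ·) '' 𝒰) := by
  refine ⟨?_, eq_univ_of_forall fun x => ?_⟩
  · rintro _ ⟨U, hU, rfl⟩
    exact (h.1 U hU).preimage hπ
  · obtain ⟨U, hU, hx⟩ := h.2 ▸ mem_univ (π x)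
    exact ⟨_, ⟨U, hU, rfl⟩, hx⟩

lemma entropy_eq_zero_of_semiconj [CompactSpace X] {π : X → Y} (hπ : Continuous π)
    (hπs : Function.Surjective π) (hT : Continuous T) {S : Y → Y} (h : Function.Semiconj π T S)
    (hT0 : entropy T = 0) : entropy S = 0 := by
  refine entropy_eq_zero_iff.2 fun 𝒰 h𝒰 => (entropy_eq_zero_iff.1 hT0 _ (h𝒰.preimage hπ)).mono
    fun n => ?_
  obtain ⟨F, hF𝒱, hF, hcard⟩ := ((h𝒰.preimage hπ).iterJoin hT n).exists_finset_card_eq_coverNum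
  choose! W hW hVW using fun V (hV : V ∈ F) => exists_eq_preimage_of_mem_iterJoin h (hF𝒱 hV)
  refine hcard ▸ coverNum_le_card_of_cover W hW fun y => ?_
  obtain ⟨x, rfl⟩ := hπs y
  obtain ⟨V, hV, hx⟩ := hF ▸ mem_univ x
  rw [hVW V hV] at hx
  exact ⟨V, hV, hx⟩

end Entropy

section Orbit

variable {X Y : Type*} [TopologicalSpace X] [TopologicalSpace Y] {f : ℕ → X}

lemma continuous_shiftOn (f : ℕ → X) : Continuous (shiftOn f) :=
  continuous_induced_rng.2 ((Pi.continuous_precomp (· + 1)).comp continuous_subtype_val)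

lemma shiftOn_iterate_apply (f : ℕ → X) (j : ℕ) (ω : orbitClosure f) (k : ℕ) :
    ((shiftOn f)^[j] ω : ℕ → X) k = (ω : ℕ → X) (k + j) := by
  induction j generalizing ω with
  | zero => rfl
  | succ j ih => rw [Function.iterate_succ_apply, ih]; rfl

lemma mem_orbitClosure_shift (f : ℕ → X) (i : ℕ) : (fun k => f (i + k)) ∈ orbitClosure f :=
  subset_closure ⟨i, fun _ => rfl⟩

lemma isCompact_orbitClosure [T2Space X] {K : Set X} (hK : IsCompact K) (hf : ∀ n, f n ∈ K) :
    IsCompact (orbitClosure f) := by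
  refine (isCompact_univ_pi fun _ => hK).of_isClosed_subset isClosed_closure
    (closure_minimal ?_ (isClosed_set_pi fun _ _ => hK.isClosed))
  rintro ω ⟨n, hn⟩ k -
  exact hn k ▸ hf _

lemma mapsTo_comp_orbitClosure {ψ : X → Y} (hψ : Continuous ψ) (f : ℕ → X) :
    MapsTo (ψ ∘ ·) (orbitClosure f) (orbitClosure (ψ ∘ f)) := by
  refine MapsTo.closure ?_ (Pi.continuous_postcomp hψ)
  rintro ω ⟨n, hn⟩
  exact ⟨n, fun k => by simp [hn k]⟩

lemma orbitClosure_comp [T2Space Y] {ψ : X → Y} (hψ : Continuous ψ)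
    (hf : IsCompact (orbitClosure f)) : orbitClosure (ψ ∘ f) = (ψ ∘ ·) '' orbitClosure f := by
  refine (closure_minimal ?_ (hf.image (Pi.continuous_postcomp hψ)).isClosed).antisymm
    (mapsTo_comp_orbitClosure hψ f).image_subset
  rintro ω ⟨n, hn⟩
  exact ⟨_, mem_orbitClosure_shift f n, funext fun k => (hn k).symm⟩

lemma _root_.IsCompact.orbitClosure_comp [T2Space Y] {ψ : X → Y} (hψ : Continuous ψ)
    (hf : IsCompact (orbitClosure f)) : IsCompact (orbitClosure (ψ ∘ f)) :=
  Anqie.orbitClosure_comp hψ hf ▸ hf.image (Pi.continuous_postcomp hψ)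

lemma AE_comp_eq_zero [T2Space Y] {ψ : X → Y} (hψ : Continuous ψ)
    (hf : IsCompact (orbitClosure f)) (hf0 : AE f = 0) : AE (ψ ∘ f) = 0 := by
  have : CompactSpace (orbitClosure f) := isCompact_iff_compactSpace.1 hf
  let π : orbitClosure f → orbitClosure (ψ ∘ f) :=
    fun ω => ⟨ψ ∘ ω, mapsTo_comp_orbitClosure hψ f ω.2⟩
  refine entropy_eq_zero_of_semiconj (π := π) (S := shiftOn (ψ ∘ f))
    (continuous_induced_rng.2 ((Pi.continuous_postcomp hψ).comp continuous_subtype_val))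
    ?_ (continuous_shiftOn f) (fun _ => rfl) hf0
  rintro ⟨ω, hω⟩
  obtain ⟨τ, hτ, rfl⟩ := orbitClosure_comp hψ hf ▸ hω
  exact ⟨⟨τ, hτ⟩, rfl⟩

lemma AE_const [T1Space X] (x : X) : AE (fun _ : ℕ => x) = 0 := by
  have : orbitClosure (fun _ : ℕ => x) = {fun _ => x} := by
    rw [orbitClosure, ← closure_singleton]
    congr 1
    ext ω
    exact ⟨fun ⟨_, h⟩ => funext h, fun h => ⟨0, fun k => congrFun h k⟩⟩
  have : Subsingleton (orbitClosure fun _ : ℕ => x) := this ▸ subsingleton_singleton.coe_sort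
  exact entropy_eq_zero_of_subsingleton _

end Orbit

section Cylinders

variable {M : Type*} [PseudoMetricSpace M]

lemma exists_forall_dist_lt_of_mem_uniformity {V : Set ((ℕ → M) × (ℕ → M))}
    (hV : V ∈ 𝓤 (ℕ → M)) :
    ∃ m : ℕ, ∃ δ > 0, ∀ ω τ : ℕ → M, (∀ i < m, dist (ω i) (τ i) < δ) → (ω, τ) ∈ V := by
  rw [Pi.uniformity] at hV
  obtain ⟨⟨I, ε⟩, ⟨hI, hε⟩, hsub⟩ := (HasBasis.iInf' fun i =>
    Metric.uniformity_basis_dist.comap fun p : (ℕ → M) × (ℕ → M) => (p.1 i, p.2 i)).mem_iff.1 hV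
  obtain ⟨m, hm⟩ := hI.bddAbove
  obtain ⟨δ, hδε, hδ⟩ := (((eventually_all_finite hI).2 fun i hi =>
    eventually_nhdsWithin_of_eventually_nhds (eventually_lt_nhds (hε i hi))).and
    (eventually_mem_nhdsWithin (a := (0 : ℝ)) (s := Ioi 0))).exists
  refine ⟨m + 1, δ, hδ, fun ω τ h => hsub (mem_iInter₂.2 fun i hi => ?_)⟩
  exact (h i (Nat.lt_succ_of_le (hm hi))).trans (hδε i hi)

variable {f : ℕ → M} {ε : ℝ}

def cylCover (f : ℕ → M) (ε : ℝ) : Set (Set (orbitClosure f)) :=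
  range fun c : M => {ω | dist ((ω : ℕ → M) 0) c < ε}

def cylSet (f : ℕ → M) (ε : ℝ) {n : ℕ} (c : Fin n → M) : Set (orbitClosure f) :=
  {ω | ∀ j : Fin n, dist ((ω : ℕ → M) j) (c j) < ε}

noncomputable def cylCount (f : ℕ → M) (ε : ℝ) (n : ℕ) : ℕ :=
  coverNum (iterJoin (shiftOn f) (cylCover f ε) n)

lemma isOpenCover_cylCover (f : ℕ → M) (hε : 0 < ε) : IsOpenCover (cylCover f ε) := by
  refine ⟨?_, eq_univ_of_forall fun ω => ⟨_, ⟨(ω : ℕ → M) 0, rfl⟩, by simpa using hε⟩⟩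
  rintro _ ⟨c, rfl⟩
  exact isOpen_lt (((continuous_apply 0).comp continuous_subtype_val).dist continuous_const)
    continuous_const

lemma iInter_preimage_iterate_eq_cylSet {n : ℕ} (c : Fin n → M) :
    ⋂ j : Fin n, (shiftOn f)^[j] ⁻¹' {ω | dist ((ω : ℕ → M) 0) (c j) < ε} = cylSet f ε c := by
  ext ω
  simp [cylSet, shiftOn_iterate_apply]

lemma mem_iterJoin_cylCover {n : ℕ} {V : Set (orbitClosure f)} :
    V ∈ iterJoin (shiftOn f) (cylCover f ε) n ↔ ∃ c : Fin n → M, V = cylSet f ε c := by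
  constructor
  · rintro ⟨u, hu, rfl⟩
    choose c hc using hu
    exact ⟨c, by simp only [← hc, iInter_preimage_iterate_eq_cylSet]⟩
  · rintro ⟨c, rfl⟩
    exact ⟨_, fun j => ⟨c j, rfl⟩, (iInter_preimage_iterate_eq_cylSet c).symm⟩

lemma exists_refines_iterJoin_cylCover (hf : IsCompact (orbitClosure f))
    {𝒰 : Set (Set (orbitClosure f))} (h𝒰 : IsOpenCover 𝒰) :
    ∃ ε > 0, ∃ m, Refines (iterJoin (shiftOn f) (cylCover f ε) m) 𝒰 := by
  have : CompactSpace (orbitClosure f) := isCompact_iff_compactSpace.1 hf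
  obtain ⟨V, hV, hball⟩ := lebesgue_number_lemma_sUnion isCompact_univ h𝒰.1 h𝒰.2.ge
  rw [uniformity_subtype, mem_comap] at hV
  obtain ⟨V', hV', hV'V⟩ := hV
  obtain ⟨m, δ, hδ, hδV'⟩ := exists_forall_dist_lt_of_mem_uniformity hV'
  refine ⟨δ / 2, half_pos hδ, m, fun W hW => ?_⟩
  obtain ⟨c, rfl⟩ := mem_iterJoin_cylCover.1 hW
  rcases (cylSet f (δ / 2) c).eq_empty_or_nonempty with he | ⟨ω₀, hω₀⟩
  · obtain ⟨U, hU, -⟩ := h𝒰.2 ▸ mem_univ (⟨_, mem_orbitClosure_shift f 0⟩ : orbitClosure f)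
    exact ⟨U, hU, he ▸ empty_subset U⟩
  obtain ⟨U, hU, hsub⟩ := hball ω₀ (mem_univ _)
  refine ⟨U, hU, fun ω hω => hsub (hV'V (hδV' (ω₀ : ℕ → M) ω fun i hi => ?_))⟩
  calc dist ((ω₀ : ℕ → M) i) ((ω : ℕ → M) i)
      ≤ dist ((ω₀ : ℕ → M) i) (c ⟨i, hi⟩) + dist ((ω : ℕ → M) i) (c ⟨i, hi⟩) :=
        dist_triangle_right _ _ _
    _ < δ / 2 + δ / 2 := add_lt_add (hω₀ ⟨i, hi⟩) (hω ⟨i, hi⟩)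
    _ = δ := add_halves δ

lemma AE_eq_zero_iff_subexpGrowth_cylCount (hf : IsCompact (orbitClosure f)) :
    AE f = 0 ↔ ∀ ε > 0, SubexpGrowth (cylCount f ε) := by
  have : CompactSpace (orbitClosure f) := isCompact_iff_compactSpace.1 hf
  refine ⟨fun h ε hε => entropy_eq_zero_iff.1 h _ (isOpenCover_cylCover f hε), fun h => ?_⟩
  refine entropy_eq_zero_iff.2 fun 𝒰 h𝒰 => ?_
  obtain ⟨ε, hε, m, href⟩ := exists_refines_iterJoin_cylCover hf h𝒰
  exact ((h ε hε).comp_add_const m).mono fun n => coverNum_le_of_refines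
    ((isOpenCover_cylCover f hε).iterJoin (continuous_shiftOn f) _) (href.iterJoin_add n)

lemma exists_forall_dist_lt_shift {ω : ℕ → M} (hω : ω ∈ orbitClosure f) (n : ℕ) (hε : 0 < ε) :
    ∃ i, ∀ j : Fin n, dist (ω j) (f (i + j)) < ε := by
  have hnhds : ∀ᶠ τ in 𝓝 ω, ∀ j : Fin n, dist (ω j) (τ j) < ε :=
    eventually_all.2 fun j => Metric.tendsto_nhds.1 ((continuous_apply (j : ℕ)).tendsto ω) ε hε
      |>.mono fun τ h => by rwa [dist_comm]
  obtain ⟨τ, hτ, i, hi⟩ := mem_closure_iff_nhds.1 hω _ hnhds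
  exact ⟨i, fun j => hi j ▸ hτ j⟩

lemma cylCount_le_of_dist_le {g : ℕ → M} (hg : IsCompact (orbitClosure g)) (hε : 0 < ε)
    (hfg : ∀ n, dist (f n) (g n) ≤ ε) (n : ℕ) : cylCount f (3 * ε) n ≤ cylCount g ε n := by
  have : CompactSpace (orbitClosure g) := isCompact_iff_compactSpace.1 hg
  have : Nonempty M := ⟨f 0⟩
  obtain ⟨F, hF𝒱, hF, hcard⟩ :=
    ((isOpenCover_cylCover g hε).iterJoin (continuous_shiftOn g) n).exists_finset_card_eq_coverNum
  choose! c hc using fun V (hV : V ∈ F) => mem_iterJoin_cylCover.1 (hF𝒱 hV)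
  unfold cylCount
  refine hcard ▸ coverNum_le_card_of_cover (fun V => cylSet f (3 * ε) (c V))
    (fun V _ => mem_iterJoin_cylCover.2 ⟨_, rfl⟩) fun ω => ?_
  obtain ⟨i, hi⟩ := exists_forall_dist_lt_shift ω.2 n hε
  obtain ⟨V, hV, hgV⟩ := hF ▸ mem_univ (⟨_, mem_orbitClosure_shift g i⟩ : orbitClosure g)
  rw [hc V hV] at hgV
  refine ⟨V, hV, fun j => ?_⟩
  linarith [dist_triangle4 ((ω : ℕ → M) j) (f (i + j)) (g (i + j)) (c V j), hi j, hfg (i + j),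
    hgV j]

lemma AE_eq_zero_of_forall_dist_le (hf : IsCompact (orbitClosure f))
    (h : ∀ δ > 0, ∃ g : ℕ → M, IsCompact (orbitClosure g) ∧ AE g = 0 ∧ ∀ n, dist (f n) (g n) ≤ δ) :
    AE f = 0 := by
  refine (AE_eq_zero_iff_subexpGrowth_cylCount hf).2 fun ε hε => ?_
  obtain ⟨g, hg, hg0, hfg⟩ := h (ε / 3) (by positivity)
  refine ((AE_eq_zero_iff_subexpGrowth_cylCount hg).1 hg0 (ε / 3) (by positivity)).mono fun n => ?_
  simpa [mul_div_cancel₀] using cylCount_le_of_dist_le hg (by positivity) hfg n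

lemma cylCount_prod_le {M' : Type*} [PseudoMetricSpace M'] {g : ℕ → M'}
    (hf : IsCompact (orbitClosure f)) (hg : IsCompact (orbitClosure g)) (hε : 0 < ε) (n : ℕ) :
    cylCount (fun k => (f k, g k)) ε n ≤ cylCount f ε n * cylCount g ε n := by
  have : CompactSpace (orbitClosure f) := isCompact_iff_compactSpace.1 hf
  have : CompactSpace (orbitClosure g) := isCompact_iff_compactSpace.1 hg
  have : Nonempty M := ⟨f 0⟩
  have : Nonempty M' := ⟨g 0⟩
  obtain ⟨F, hF𝒱, hF, hFc⟩ :=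
    ((isOpenCover_cylCover f hε).iterJoin (continuous_shiftOn f) n).exists_finset_card_eq_coverNum
  obtain ⟨G, hG𝒱, hG, hGc⟩ :=
    ((isOpenCover_cylCover g hε).iterJoin (continuous_shiftOn g) n).exists_finset_card_eq_coverNum
  choose! c hc using fun V (hV : V ∈ F) => mem_iterJoin_cylCover.1 (hF𝒱 hV)
  choose! d hd using fun W (hW : W ∈ G) => mem_iterJoin_cylCover.1 (hG𝒱 hW)
  unfold cylCount
  rw [← hFc, ← hGc, ← Finset.card_product]
  refine coverNum_le_card_of_cover (fun VW => cylSet _ ε fun j => (c VW.1 j, d VW.2 j))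
    (fun _ _ => mem_iterJoin_cylCover.2 ⟨_, rfl⟩) fun ω => ?_
  obtain ⟨V, hV, hωV⟩ := hF ▸ mem_univ
    (⟨_, mapsTo_comp_orbitClosure continuous_fst _ ω.2⟩ : orbitClosure f)
  obtain ⟨W, hW, hωW⟩ := hG ▸ mem_univ
    (⟨_, mapsTo_comp_orbitClosure continuous_snd _ ω.2⟩ : orbitClosure g)
  rw [hc V hV] at hωV
  rw [hd W hW] at hωW
  refine ⟨(V, W), Finset.mem_product.2 ⟨hV, hW⟩, fun j => ?_⟩
  rw [Prod.dist_eq]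
  exact max_lt (hωV j) (hωW j)

lemma AE_prod_eq_zero {M M' : Type*} [MetricSpace M] [MetricSpace M'] {f : ℕ → M} {g : ℕ → M'}
    (hp : IsCompact (orbitClosure fun k => (f k, g k))) (hf0 : AE f = 0) (hg0 : AE g = 0) :
    AE (fun k => (f k, g k)) = 0 := by
  have hf : IsCompact (orbitClosure f) :=
    hp.orbitClosure_comp (f := fun k => (f k, g k)) continuous_fst
  have hg : IsCompact (orbitClosure g) :=
    hp.orbitClosure_comp (f := fun k => (f k, g k)) continuous_snd
  refine (AE_eq_zero_iff_subexpGrowth_cylCount hp).2 fun ε hε => ?_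
  exact (((AE_eq_zero_iff_subexpGrowth_cylCount hf).1 hf0 ε hε).mul
    ((AE_eq_zero_iff_subexpGrowth_cylCount hg).1 hg0 ε hε)).mono (cylCount_prod_le hf hg hε)

end Cylinders

section E0

open Bornology BoundedContinuousFunction

variable {M M' Y : Type*} [MetricSpace M] [ProperSpace M] [MetricSpace M'] [ProperSpace M']
  [TopologicalSpace Y] [T2Space Y]

lemma isCompact_orbitClosure_of_isBounded {f : ℕ → M} (hf : IsBounded (range f)) :
    IsCompact (orbitClosure f) :=
  isCompact_orbitClosure hf.isCompact_closure fun n => subset_closure ⟨n, rfl⟩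

lemma AE_map₂_eq_zero {ψ : M × M' → Y} (hψ : Continuous ψ) {f : ℕ → M} {g : ℕ → M'}
    (hf : IsBounded (range f)) (hg : IsBounded (range g)) (hf0 : AE f = 0) (hg0 : AE g = 0) :
    AE (fun n => ψ (f n, g n)) = 0 := by
  have hp : IsCompact (orbitClosure fun n => (f n, g n)) :=
    isCompact_orbitClosure_of_isBounded ((hf.prod hg).subset (range_subset_iff.2 fun n =>
      ⟨mem_range_self n, mem_range_self n⟩))
  exact AE_comp_eq_zero hψ hp (AE_prod_eq_zero hp hf0 hg0)

lemma isClosed_setOf_AE_eq_zero : IsClosed {f : ℕ →ᵇ M | AE ⇑f = 0} := by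
  refine isClosed_of_closure_subset fun f hf => AE_eq_zero_of_forall_dist_le
    (isCompact_orbitClosure_of_isBounded f.isBounded_range) fun δ hδ => ?_
  obtain ⟨g, hg, hfg⟩ := Metric.mem_closure_iff.1 hf δ hδ
  exact ⟨g, isCompact_orbitClosure_of_isBounded g.isBounded_range, hg,
    fun n => (dist_coe_le_dist n).trans hfg.le⟩

def E0 : StarSubalgebra ℂ (ℕ →ᵇ ℂ) where
  carrier := {f | AE ⇑f = 0}
  mul_mem' {f g} := AE_map₂_eq_zero (ψ := fun p : ℂ × ℂ => p.1 * p.2) (by fun_prop)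
    f.isBounded_range g.isBounded_range
  add_mem' {f g} := AE_map₂_eq_zero (ψ := fun p : ℂ × ℂ => p.1 + p.2) (by fun_prop)
    f.isBounded_range g.isBounded_range
  algebraMap_mem' c := AE_const c
  star_mem' {f} := AE_comp_eq_zero continuous_star
    (isCompact_orbitClosure_of_isBounded f.isBounded_range)

instance : IsClosed (E0 : Set (ℕ →ᵇ ℂ)) := isClosed_setOf_AE_eq_zero

end E0

section Characters

open BoundedContinuousFunction

-- `E0sub` is `↥E0` up to unfolding membership, so `φ` is itself a function on `E0`.
variable {φ : E0sub → ℂ}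

lemma CharSpace.map_one (hφ : φ ∈ CharSpace) : φ (1 : E0) = 1 := by
  obtain ⟨⟨f, hf⟩, -, -, hmul⟩ := hφ
  exact (mul_eq_left₀ hf).1 (hmul f (1 : E0) f (mul_one _).symm).symm

noncomputable def CharSpace.toAlgHom (hφ : φ ∈ CharSpace) : E0 →ₐ[ℂ] ℂ where
  toFun := φ
  map_one' := CharSpace.map_one hφ
  map_mul' f g := hφ.2.2.2 f g (f * g) rfl
  map_zero' := by simpa using hφ.2.2.1 0 (0 : E0) (0 : E0) (zero_smul ℂ _).symm
  map_add' f g := hφ.2.1 f g (f + g) rfl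
  commutes' c := by
    simpa [CharSpace.map_one hφ] using
      hφ.2.2.1 c (1 : E0) (algebraMap ℂ E0 c) (Algebra.algebraMap_eq_smul_one c)

lemma mem_charSpace (χ : characterSpace ℂ E0) : (fun t : E0sub => χ t) ∈ CharSpace :=
  ⟨⟨(1 : E0), by simp⟩,
    fun (f g h : E0) hh => by simp [show h = f + g from Subtype.ext hh],
    fun c (f g : E0) hg => by simp [show g = c • f from Subtype.ext hg],
    fun (f g h : E0) hh => by simp [show h = f * g from Subtype.ext hh]⟩

noncomputable def charSpaceHomeomorph : CharSpace ≃ₜ characterSpace ℂ E0 where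
  toFun φ := CharacterSpace.equivAlgHom.symm (CharSpace.toAlgHom φ.2)
  invFun χ := ⟨fun t => χ t, mem_charSpace χ⟩
  left_inv _ := rfl
  right_inv _ := rfl
  continuous_toFun := by
    refine Continuous.subtype_mk (WeakDual.continuous_of_continuous_eval fun t => ?_) _
    exact (continuous_apply t).comp continuous_subtype_val
  continuous_invFun :=
    (continuous_pi fun t => (WeakDual.eval_continuous t).comp continuous_subtype_val).subtype_mk _

noncomputable def evalAlgHom (n : ℕ) : E0 →ₐ[ℂ] ℂ where
  toFun t := (t : ℕ →ᵇ ℂ) n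
  map_one' := rfl
  map_mul' _ _ := rfl
  map_zero' := rfl
  map_add' _ _ := rfl
  commutes' _ := rfl

lemma spectrum_finite_iff (t : E0) :
    (spectrum ℂ t).Finite ↔ (range ⇑(t : ℕ →ᵇ ℂ)).Finite := by
  refine ⟨fun h => h.subset ?_, fun h => ?_⟩
  · rintro _ ⟨n, rfl⟩
    exact AlgHom.apply_mem_spectrum (evalAlgHom n) t
  · rw [StarSubalgebra.spectrum_eq E0]
    exact h.subset ((t : ℕ →ᵇ ℂ).spectrum_subset_closure_range.trans h.isClosed.closure_subset)

lemma dense_setOf_range_finite_iff :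
    Dense {t : E0 | (range ⇑(t : ℕ →ᵇ ℂ)).Finite} ↔
      {f : ℕ →ᵇ ℂ | AE ⇑f = 0} = closure {f : ℕ →ᵇ ℂ | AE ⇑f = 0 ∧ (range ⇑f).Finite} := by
  have himage : ((↑) : E0 → ℕ →ᵇ ℂ) '' {t | (range ⇑(t : ℕ →ᵇ ℂ)).Finite} =
      {f : ℕ →ᵇ ℂ | AE ⇑f = 0 ∧ (range ⇑f).Finite} := by
    ext f
    exact ⟨fun ⟨t, ht, hf⟩ => hf ▸ ⟨t.2, ht⟩, fun hf => ⟨⟨f, hf.1⟩, hf.2, rfl⟩⟩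
  rw [(IsEmbedding.subtypeVal (p := (· ∈ E0))).isInducing.dense_iff, himage]
  refine ⟨fun h => Subset.antisymm (fun f hf => h ⟨f, hf⟩) ?_, fun h t => h ▸ t.2⟩
  exact closure_minimal (fun f hf => hf.1) isClosed_setOf_AE_eq_zero

end Characters

end Anqie

/-- Let `F₀(ℕ)` be the set of bounded arithmetic functions with
zero anqie entropy and finite range. The character space `E₀(ℕ)` of `E₀` is
totally disconnected if and only if `E₀` is the sup-norm closure of `F₀(ℕ)`. -/
theorem totally_disconnected_iff_finite_range_dense :
    TotallyDisconnectedSpace ↥Anqie.CharSpace ↔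
      {f : BoundedContinuousFunction ℕ ℂ | Anqie.AE ⇑f = 0} =
        closure {f : BoundedContinuousFunction ℕ ℂ |
          Anqie.AE ⇑f = 0 ∧ (Set.range ⇑f).Finite} := by
  open Anqie in
  calc TotallyDisconnectedSpace CharSpace ↔ TotallyDisconnectedSpace (characterSpace ℂ E0) :=
        ⟨fun _ => charSpaceHomeomorph.totallyDisconnectedSpace,
          fun _ => charSpaceHomeomorph.symm.totallyDisconnectedSpace⟩
    _ ↔ Dense {t : E0 | (spectrum ℂ t).Finite} := totallyDisconnectedSpace_characterSpace_iff_dense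
    _ ↔ Dense {t : E0 | (range ⇑(t : ℕ →ᵇ ℂ)).Finite} := by simp only [spectrum_finite_iff]
    _ ↔ _ := dense_setOf_range_finite_iff
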